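/- arXiv:2504.15461 — 8 statements merged into one kernel-verified Lean document; each statement's English description precedes it below -/
import Mathlib

section
/- For A, B in SL(2) over an algebraically closed field of characteristic zero, tr(ABA⁻¹B⁻¹) = 2 if and only if det(AB − BA) = 0. -/
/-- For `A, B ∈ SL(2)` over an algebraically closed field of characteristic zero,
`tr(ABA⁻¹B⁻¹) = 2` iff `det(AB − BA) = 0`. -/
theorem trace_commutator_eq_two_iff (k : Type) [Field k] [IsAlgClosed k] [CharZero k]
    (A B : Matrix (Fin 2) (Fin 2) k) (hA : A.det = 1) (hB : B.det = 1) :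
    Matrix.trace (A * B * A⁻¹ * B⁻¹) = 2 ↔ (A * B - B * A).det = 0 := by
  have hAi : A⁻¹ = A.adjugate := by
    rw [Matrix.inv_def, hA, Ring.inverse_one, one_smul]
  have hBi : B⁻¹ = B.adjugate := by
    rw [Matrix.inv_def, hB, Ring.inverse_one, one_smul]
  rw [hAi, hBi]
  rw [Matrix.det_fin_two] at hA hB
  have key : Matrix.trace (A * B * A.adjugate * B.adjugate)
      = 2 - (A * B - B * A).det := by
    simp only [Matrix.adjugate_fin_two, Matrix.trace_fin_two, Matrix.det_fin_two,
      Matrix.mul_apply, Matrix.sub_apply, Fin.sum_univ_two, Matrix.of_apply,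
      Matrix.cons_val', Matrix.cons_val_zero, Matrix.cons_val_one, Matrix.head_cons,
      Matrix.head_fin_const, Matrix.empty_val', Matrix.cons_val_fin_one]
    linear_combination (2 * B 0 0 * B 1 1 - 2 * B 0 1 * B 1 0) * hA + 2 * hB
  rw [key, sub_eq_self]
end

section
/- For A, B in SL(2) over a field of characteristic zero, det(AB − BA) = 0 if and only if F(tr(A), tr(B), tr(AB)) = 0, where F(s,t,u) = s² + t² + u² − stu − 4. -/
/-- For `A, B ∈ SL(2)` over a field of characteristic zero, `det(AB − BA) = 0` iff
`F(tr A, tr B, tr AB) = 0` where `F(s,t,u) = s² + t² + u² − stu − 4`. -/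
theorem det_commutator_eq_zero_iff_cayley_cubic (k : Type) [Field k] [CharZero k]
    (A B : Matrix (Fin 2) (Fin 2) k) (hA : A.det = 1) (hB : B.det = 1) :
    (A * B - B * A).det = 0 ↔
      (Matrix.trace A) ^ 2 + (Matrix.trace B) ^ 2 + (Matrix.trace (A * B)) ^ 2
        - Matrix.trace A * Matrix.trace B * Matrix.trace (A * B) - 4 = 0 := by
  have key : (A * B - B * A).det =
      -((Matrix.trace A) ^ 2 + (Matrix.trace B) ^ 2 + (Matrix.trace (A * B)) ^ 2
        - Matrix.trace A * Matrix.trace B * Matrix.trace (A * B) - 4) := by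
    rw [Matrix.det_fin_two] at hA hB
    simp only [Matrix.det_fin_two, Matrix.trace_fin_two, Matrix.mul_apply,
      Matrix.sub_apply, Fin.sum_univ_two]
    linear_combination (-(B 0 0 + B 1 1) ^ 2 + 4 * (B 0 0 * B 1 1 - B 0 1 * B 1 0)) * hA
      + (4 - (A 0 0 + A 1 1) ^ 2) * hB
  rw [key, neg_eq_zero]
end

section
/- If A, B in SL(2)(k̄) satisfy ABA⁻¹B⁻¹ = −I, then tr(A) = tr(B) = tr(AB) = 0. -/
/-- If `A, B ∈ SL(2)(k̄)` satisfy `ABA⁻¹B⁻¹ = −I`, then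
`tr(A) = tr(B) = tr(AB) = 0`. -/
theorem traces_vanish_of_commutator_eq_neg_one (k : Type) [Field k] [IsAlgClosed k] [CharZero k]
    (A B : Matrix (Fin 2) (Fin 2) k) (hA : A.det = 1) (hB : B.det = 1)
    (h : A * B * A⁻¹ * B⁻¹ = -1) :
    Matrix.trace A = 0 ∧ Matrix.trace B = 0 ∧ Matrix.trace (A * B) = 0 := by
  have hAu : IsUnit A.det := by simp [hA]
  have hBu : IsUnit B.det := by simp [hB]
  have hAA : A⁻¹ * A = 1 := Matrix.nonsing_inv_mul A hAu
  have hBB : B⁻¹ * B = 1 := Matrix.nonsing_inv_mul B hBu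
  have hAA' : A * A⁻¹ = 1 := Matrix.mul_nonsing_inv A hAu
  have hBB' : B * B⁻¹ = 1 := Matrix.mul_nonsing_inv B hBu
  have h2 : A * B * A⁻¹ = -B := by
    have h' : A * B * A⁻¹ * B⁻¹ * B = -1 * B := by rw [h]
    rwa [mul_assoc, hBB, mul_one, neg_one_mul] at h'
  have key : A * B = -(B * A) := by
    have h' : A * B * A⁻¹ * A = -B * A := by rw [h2]
    rwa [mul_assoc, hAA, mul_one, neg_mul] at h'
  have htAB : Matrix.trace (A * B) = 0 := by
    have h1 : Matrix.trace (A * B) = -(Matrix.trace (A * B)) := by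
      conv_lhs => rw [key]
      rw [Matrix.trace_neg, Matrix.trace_mul_comm]
    linear_combination h1 / 2
  have hconjA : A = -(B * A * B⁻¹) := by
    have h' : A * B * B⁻¹ = -(B * A) * B⁻¹ := by rw [key]
    rwa [mul_assoc, hBB', mul_one, neg_mul] at h'
  have htA : Matrix.trace A = 0 := by
    have h1 : Matrix.trace A = -(Matrix.trace A) := by
      conv_lhs => rw [hconjA]
      rw [Matrix.trace_neg, Matrix.trace_mul_comm, ← mul_assoc, hBB, one_mul]
    linear_combination h1 / 2
  have hconjB : B = -(A⁻¹ * (B * A)) := by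
    have h' : A⁻¹ * (A * B) = A⁻¹ * -(B * A) := by rw [key]
    rwa [← mul_assoc, hAA, one_mul, mul_neg] at h'
  have htB : Matrix.trace B = 0 := by
    have h1 : Matrix.trace B = -(Matrix.trace B) := by
      conv_lhs => rw [hconjB]
      rw [Matrix.trace_neg, Matrix.trace_mul_comm, mul_assoc, hAA', mul_one]
    linear_combination h1 / 2
  exact ⟨htA, htB, htAB⟩
end

section
/- There exist A, B in SL(2)(k) with ABA⁻¹B⁻¹ = −I if and only if −1 is a sum of two squares in k. -/
open Matrix

/-- There exist `A, B ∈ SL(2)(k)` with `ABA⁻¹B⁻¹ = −I` if and only if `−1` is a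
sum of two squares in `k`. -/
theorem commutator_eq_neg_one_iff_sum_two_squares (k : Type) [Field k] [CharZero k] :
    (∃ A B : Matrix.SpecialLinearGroup (Fin 2) k, A * B * A⁻¹ * B⁻¹ = -1) ↔
      (∃ a b : k, a ^ 2 + b ^ 2 = -1) := by
  constructor
  · rintro ⟨A, B, h⟩
    have hAB : A * B = (-1) * (B * A) := by
      rw [← h]; group
    have hm : (A : Matrix (Fin 2) (Fin 2) k) * B = -((B : Matrix (Fin 2) (Fin 2) k) * A) := by
      have := congrArg (fun X : Matrix.SpecialLinearGroup (Fin 2) k => (X : Matrix (Fin 2) (Fin 2) k)) hAB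
      simpa [Matrix.SpecialLinearGroup.coe_mul, Matrix.SpecialLinearGroup.coe_neg, neg_mul] using this
    set M := (A : Matrix (Fin 2) (Fin 2) k) with hMdef
    set N := (B : Matrix (Fin 2) (Fin 2) k) with hNdef
    have hdM : M.det = 1 := A.2
    have hdN : N.det = 1 := B.2
    have hNu : IsUnit N.det := by rw [hdN]; exact isUnit_one
    have hMu : IsUnit M.det := by rw [hdM]; exact isUnit_one
    have hnm : N * M = -(M * N) := by rw [hm, neg_neg]
    -- trace M = 0
    have htrM : M.trace = 0 := by
      have h1 : -(N * M * N⁻¹) = M := by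
        rw [← neg_mul, ← hm, Matrix.mul_assoc, Matrix.mul_nonsing_inv _ hNu, Matrix.mul_one]
      have h2 : Matrix.trace (-(N * M * N⁻¹)) = -Matrix.trace M := by
        rw [trace_neg, Matrix.trace_mul_comm, ← Matrix.mul_assoc,
          Matrix.nonsing_inv_mul _ hNu, Matrix.one_mul]
      have h3 := congrArg Matrix.trace h1
      rw [h2] at h3
      linear_combination (-1/2 : k) * h3
    have htrN : N.trace = 0 := by
      have h1 : -(M * N * M⁻¹) = N := by
        rw [← neg_mul, ← hnm, Matrix.mul_assoc, Matrix.mul_nonsing_inv _ hMu, Matrix.mul_one]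
      have h2 : Matrix.trace (-(M * N * M⁻¹)) = -Matrix.trace N := by
        rw [trace_neg, Matrix.trace_mul_comm, ← Matrix.mul_assoc,
          Matrix.nonsing_inv_mul _ hMu, Matrix.one_mul]
      have h3 := congrArg Matrix.trace h1
      rw [h2] at h3
      linear_combination (-1/2 : k) * h3
    have htrMN : Matrix.trace (M * N) = 0 := by
      have h3 : -Matrix.trace (M * N) = Matrix.trace (M * N) := by
        conv_rhs => rw [Matrix.trace_mul_comm, hnm]
        rw [trace_neg]
      linear_combination (-1/2 : k) * h3
    -- extract entries
    rw [Matrix.trace_fin_two] at htrM htrN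
    rw [Matrix.trace_fin_two, Matrix.mul_apply, Matrix.mul_apply, Fin.sum_univ_two,
      Fin.sum_univ_two] at htrMN
    rw [Matrix.det_fin_two] at hdM hdN
    have e1 : M 1 1 = -(M 0 0) := by linear_combination htrM
    have e2 : N 1 1 = -(N 0 0) := by linear_combination htrN
    have h1 : (M 0 0) ^ 2 + M 0 1 * M 1 0 = -1 := by
      linear_combination -hdM + (M 0 0) * e1
    have h2 : (N 0 0) ^ 2 + N 0 1 * N 1 0 = -1 := by
      linear_combination -hdN + (N 0 0) * e2
    have h3 : 2 * (M 0 0 * N 0 0) + M 0 1 * N 1 0 + M 1 0 * N 0 1 = 0 := by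
      linear_combination htrMN - (N 1 1) * e1 + (M 0 0) * e2
    set p := M 0 0
    set q := M 0 1
    set r := M 1 0
    set s := N 0 0
    set t := N 0 1
    set u := N 1 0
    by_cases hq : q = 0
    · refine ⟨p, 0, ?_⟩
      rw [hq] at h1; linear_combination h1
    by_cases ht : t = 0
    · refine ⟨s, 0, ?_⟩
      rw [ht] at h2; linear_combination h2
    have key : q ^ 2 + t ^ 2 + (q * s - p * t) ^ 2 = 0 := by
      linear_combination t ^ 2 * h1 + q ^ 2 * h2 - q * t * h3
    refine ⟨q / t, (q * s - p * t) / t, ?_⟩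
    field_simp
    linear_combination key
  · rintro ⟨a, b, hab⟩
    refine ⟨⟨!![0, 1; -1, 0], by simp [Matrix.det_fin_two_of]⟩,
      ⟨!![a, b; b, -a], by rw [Matrix.det_fin_two_of]; linear_combination -hab⟩, ?_⟩
    set A : Matrix.SpecialLinearGroup (Fin 2) k := ⟨!![0, 1; -1, 0], by simp [Matrix.det_fin_two_of]⟩
    set B : Matrix.SpecialLinearGroup (Fin 2) k := ⟨!![a, b; b, -a], by rw [Matrix.det_fin_two_of]; linear_combination -hab⟩
    have hmat : (!![0,1;-1,0] : Matrix (Fin 2) (Fin 2) k) * !![a,b;b,-a]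
        = -(!![a,b;b,-a] * !![0,1;-1,0]) := by
      ext i j
      fin_cases i <;> fin_cases j <;>
        simp [Matrix.mul_apply, Fin.sum_univ_two]
    have hAB : A * B = (-1) * (B * A) := by
      apply Subtype.ext
      rw [Matrix.SpecialLinearGroup.coe_mul, Matrix.SpecialLinearGroup.coe_mul,
        Matrix.SpecialLinearGroup.coe_neg, Matrix.SpecialLinearGroup.coe_one,
        Matrix.SpecialLinearGroup.coe_mul]
      show (!![0,1;-1,0] : Matrix (Fin 2) (Fin 2) k) * !![a,b;b,-a]
        = -1 * (!![a,b;b,-a] * !![0,1;-1,0])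
      rw [neg_one_mul, hmat]
    rw [hAB]; group
end

section
/- Over an algebraically closed field k̄ of characteristic zero, there exist commuting diagonal matrices A, B in SL(2)(k̄) realizing any prescribed point of the Cayley cubic: for (s,t,u) with s² + t² + u² − stu − 4 = 0, there exist A, B in SL(2)(k̄) with AB = BA, tr(A) = s, tr(B) = t, tr(AB) = u. -/
/-- Diagonal SL2 realization helper. -/
theorem diag_realize (k : Type) [Field k] (a a' b b' : k) (h1 : a * a' = 1)
    (h2 : b * b' = 1) :
    ∃ A B : Matrix (Fin 2) (Fin 2) k, A.det = 1 ∧ B.det = 1 ∧ A * B = B * A ∧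
      Matrix.trace A = a + a' ∧ Matrix.trace B = b + b' ∧
      Matrix.trace (A * B) = a * b + a' * b' := by
  refine ⟨!![a, 0; 0, a'], !![b, 0; 0, b'], ?_, ?_, ?_, ?_, ?_, ?_⟩ <;>
    simp [Matrix.det_fin_two_of, Matrix.mul_fin_two, Matrix.trace_fin_two_of, h1, h2, mul_comm]

/-- Any point of the Cayley cubic `s² + t² + u² − stu − 4 = 0` over an algebraically
closed field of characteristic zero is realized by a commuting pair `A, B ∈ SL(2)(k̄)`
with `tr A = s`, `tr B = t`, `tr AB = u`. -/
theorem cayley_cubic_point_realized (k : Type) [Field k] [IsAlgClosed k] [CharZero k]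
    (s t u : k) (h : s ^ 2 + t ^ 2 + u ^ 2 - s * t * u - 4 = 0) :
    ∃ A B : Matrix (Fin 2) (Fin 2) k, A.det = 1 ∧ B.det = 1 ∧ A * B = B * A ∧
      Matrix.trace A = s ∧ Matrix.trace B = t ∧ Matrix.trace (A * B) = u := by
  obtain ⟨w, hw⟩ := IsAlgClosed.exists_pow_nat_eq (s ^ 2 - 4) (n := 2) (by norm_num)
  obtain ⟨z, hz⟩ := IsAlgClosed.exists_pow_nat_eq (t ^ 2 - 4) (n := 2) (by norm_num)
  set a := (s + w) / 2 with ha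
  set a' := (s - w) / 2 with ha'
  set b := (t + z) / 2 with hb
  set b' := (t - z) / 2 with hb'
  have h1 : a * a' = 1 := by
    rw [ha, ha']; field_simp; linear_combination -hw
  have h2 : b * b' = 1 := by
    rw [hb, hb']; field_simp; linear_combination -hz
  have hs : a + a' = s := by rw [ha, ha']; ring
  have ht : b + b' = t := by rw [hb, hb']; ring
  have key : (u - (a * b + a' * b')) * (u - (a * b' + a' * b)) = 0 := by
    linear_combination h + (b ^ 2 + b' ^ 2 - 2) * h1 + (a ^ 2 + a' ^ 2 - 2) * h2
      + (b * u + b' * u - a * b ^ 2 - a' * b' ^ 2 - a * b * b' - a' * b * b' - t * u) * hs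
      + (s * u - a * a' * b - a * a' * b' - a ^ 2 * b' - a' ^ 2 * b) * ht
  rcases mul_eq_zero.mp key with hk | hk
  · obtain ⟨A, B, hA, hB, hc, h3, h4, h5⟩ := diag_realize k a a' b b' h1 h2
    exact ⟨A, B, hA, hB, hc, by rw [h3, hs], by rw [h4, ht],
      by rw [h5]; linear_combination -hk⟩
  · obtain ⟨A, B, hA, hB, hc, h3, h4, h5⟩ := diag_realize k a a' b' b h1 (by linear_combination h2)
    exact ⟨A, B, hA, hB, hc, by rw [h3, hs], by rw [h4, ← ht]; ring,
      by rw [h5]; linear_combination -hk⟩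
end

section
/- Let α in SL(2)(k) be non-central with tr(α) = 2. Then in a suitable basis α is the upper unitriangular matrix with entry 1, and if A, B in SL(2)(k) satisfy ABA⁻¹B⁻¹ = α (with α = [[1,1],[0,1]]), then both A and B are upper triangular. -/
/-- A non-central `α ∈ SL(2)(k)` of trace `2` is conjugate to `[[1,1],[0,1]]`, and if
`ABA⁻¹B⁻¹ = [[1,1],[0,1]]` with `A, B ∈ SL(2)(k)`, then `A` and `B` are upper
triangular. -/
theorem trace_two_commutator_upper_triangular (k : Type) [Field k] [CharZero k]
    (α : Matrix (Fin 2) (Fin 2) k) (hα : α.det = 1) (htr : Matrix.trace α = 2)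
    (hαnc : α ≠ 1) :
    (∃ P : Matrix (Fin 2) (Fin 2) k, IsUnit P.det ∧ P⁻¹ * α * P = !![1, 1; 0, 1]) ∧
    (∀ A B : Matrix (Fin 2) (Fin 2) k, A.det = 1 → B.det = 1 →
      A * B * A⁻¹ * B⁻¹ = !![1, 1; 0, 1] → A 1 0 = 0 ∧ B 1 0 = 0) := by
  constructor
  · -- Part 1
    have hd : α.det = α 0 0 * α 1 1 - α 0 1 * α 1 0 := Matrix.det_fin_two α
    have ht : Matrix.trace α = α 0 0 + α 1 1 := Matrix.trace_fin_two α
    rw [hd] at hα; rw [ht] at htr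
    by_cases hc : α 1 0 = 0
    · -- then α 0 0 = 1, α 1 1 = 1, α 0 1 ≠ 0
      have ha : α 0 0 = 1 := by
        have h2 : (α 0 0 - 1)^2 = 0 := by
          linear_combination (α 0 0) * htr - hα - (α 0 1) * hc
        have := pow_eq_zero_iff (n := 2) (by norm_num) |>.mp h2
        linear_combination this
      have hd1 : α 1 1 = 1 := by linear_combination htr - ha
      have hb : α 0 1 ≠ 0 := by
        intro hb0
        apply hαnc
        ext i j
        fin_cases i <;> fin_cases j <;> simp_all
      refine ⟨!![α 0 1, 0; 0, 1], ?_, ?_⟩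
      · simp [Matrix.det_fin_two_of, hb]
      · have hP : IsUnit (!![α 0 1, 0; 0, 1] : Matrix (Fin 2) (Fin 2) k).det := by
          simp [Matrix.det_fin_two_of, hb]
        have key : α * !![α 0 1, 0; 0, 1] = !![α 0 1, 0; 0, 1] * !![1, 1; 0, 1] := by
          ext i j
          fin_cases i <;> fin_cases j <;>
            simp [Matrix.mul_apply, Fin.sum_univ_two, ha, hd1, hc]
        rw [mul_assoc, key, ← mul_assoc, Matrix.nonsing_inv_mul _ hP, one_mul]
    · refine ⟨!![α 0 0 - 1, 1; α 1 0, 0], ?_, ?_⟩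
      · simp [Matrix.det_fin_two_of, hc]
      · have hP : IsUnit (!![α 0 0 - 1, 1; α 1 0, 0] : Matrix (Fin 2) (Fin 2) k).det := by
          simp [Matrix.det_fin_two_of, hc]
        have key : α * !![α 0 0 - 1, 1; α 1 0, 0]
            = !![α 0 0 - 1, 1; α 1 0, 0] * !![1, 1; 0, 1] := by
          ext i j
          fin_cases i <;> fin_cases j <;> simp [Matrix.mul_apply, Fin.sum_univ_two]
          · linear_combination α 0 0 * htr - hα
          · linear_combination α 1 0 * htr
        rw [mul_assoc, key, ← mul_assoc, Matrix.nonsing_inv_mul _ hP, one_mul]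
  · -- Part 2
    intro A B hA hB hcomm
    have hAu : IsUnit A.det := by rw [hA]; exact isUnit_one
    have hBu : IsUnit B.det := by rw [hB]; exact isUnit_one
    constructor
    · -- A 1 0 = 0 via trace of B*A⁻¹*B⁻¹ = A⁻¹*N
      have h2 : B * A⁻¹ * B⁻¹ = A⁻¹ * !![1, 1; 0, 1] := by
        have h : A⁻¹ * (A * B * A⁻¹ * B⁻¹) = A⁻¹ * !![1, 1; 0, 1] := by rw [hcomm]
        calc B * A⁻¹ * B⁻¹ = A⁻¹ * A * B * A⁻¹ * B⁻¹ := by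
              rw [Matrix.nonsing_inv_mul A hAu, one_mul]
          _ = A⁻¹ * (A * B * A⁻¹ * B⁻¹) := by simp only [mul_assoc]
          _ = A⁻¹ * !![1, 1; 0, 1] := h
      have ht2 : Matrix.trace (B * A⁻¹ * B⁻¹) = Matrix.trace A⁻¹ := by
        rw [Matrix.trace_mul_comm, ← mul_assoc, Matrix.nonsing_inv_mul B hBu, one_mul]
      have hEq : Matrix.trace A⁻¹ = Matrix.trace (A⁻¹ * !![1, 1; 0, 1]) := by
        rw [← h2, ht2]
      have hinv10 : A⁻¹ 1 0 = -(A 1 0) := by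
        rw [Matrix.inv_def, hA, Matrix.adjugate_fin_two]
        simp [Ring.inverse_one]
      rw [Matrix.trace_fin_two, Matrix.trace_fin_two] at hEq
      simp [Matrix.mul_apply, Fin.sum_univ_two] at hEq
      rw [← neg_eq_zero, ← hinv10]
      exact hEq
    · have h1 : A * B * A⁻¹ = !![1, 1; 0, 1] * B := by
        calc A * B * A⁻¹ = A * B * A⁻¹ * B⁻¹ * B := by
              rw [mul_assoc (A * B * A⁻¹), Matrix.nonsing_inv_mul B hBu, mul_one]
          _ = !![1, 1; 0, 1] * B := by rw [hcomm]
      have ht1 : Matrix.trace (A * B * A⁻¹) = Matrix.trace B := by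
        rw [Matrix.trace_mul_comm, ← mul_assoc, Matrix.nonsing_inv_mul A hAu, one_mul]
      have hEq : Matrix.trace B = Matrix.trace (!![1, 1; 0, 1] * B) := by
        rw [← h1, ht1]
      rw [Matrix.trace_fin_two, Matrix.trace_fin_two] at hEq
      simp [Matrix.mul_apply, Fin.sum_univ_two] at hEq
      exact hEq
end

section
/- For any non-trivial word w in the free group on two generators, there is a polynomial P_w in ℤ[s,t,u] such that for all A, B in SL(2) over any commutative ring, tr(w(A,B)) = P_w(tr(A), tr(B), tr(AB)). -/
/-!
Cayley–Hamilton in `M₂(R)` gives `A² = tr A • A - 1` for `det A = 1`, and its polarization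
`AB + BA = tr A • B + tr B • A + (tr AB - tr A tr B) • 1` holds for all `A, B`. Hence left
multiplication by `A`, by `B`, and by `A⁻¹ = tr A • 1 - A` maps a combination
`p + qA + rB + sAB` to another one, whose coefficients are integer polynomials in `p, q, r, s`,
`tr A`, `tr B`, `tr AB`. By induction on `w`, `w(A, B) = p + qA + rB + sAB` with `p, q, r, s`
universal polynomials in the three traces, and then `tr w(A, B) = 2p + tr A q + tr B r + tr AB s`.
-/

open Matrix MvPolynomial
open scoped MatrixGroups

namespace Matrix

variable {R : Type*} [CommRing R]

theorem mul_self_fin_two (A : Matrix (Fin 2) (Fin 2) R) :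
    A * A = A.trace • A - A.det • (1 : Matrix (Fin 2) (Fin 2) R) := by
  ext i j
  fin_cases i <;> fin_cases j <;>
    simp [mul_apply, Fin.sum_univ_succ, trace_fin_two, det_fin_two] <;> ring

theorem mul_add_mul_comm_fin_two (A B : Matrix (Fin 2) (Fin 2) R) :
    A * B + B * A = A.trace • B + B.trace • A
      + ((A * B).trace - A.trace * B.trace) • (1 : Matrix (Fin 2) (Fin 2) R) := by
  ext i j
  fin_cases i <;> fin_cases j <;>
    simp [mul_apply, Fin.sum_univ_succ, trace_fin_two] <;> ring

theorem adjugate_fin_two_eq_trace_smul_one_sub (A : Matrix (Fin 2) (Fin 2) R) :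
    A.adjugate = A.trace • (1 : Matrix (Fin 2) (Fin 2) R) - A := by
  ext i j
  fin_cases i <;> fin_cases j <;> simp [adjugate_fin_two, trace_fin_two]

def combOneAB (A B : Matrix (Fin 2) (Fin 2) R) (p q r s : R) : Matrix (Fin 2) (Fin 2) R :=
  p • 1 + q • A + r • B + s • (A * B)

section CombOneAB

variable (A B : Matrix (Fin 2) (Fin 2) R) (p q r s : R)

theorem trace_combOneAB :
    (combOneAB A B p q r s).trace = 2 * p + A.trace * q + B.trace * r + (A * B).trace * s := by
  simp only [combOneAB, trace_add, trace_smul, trace_one, Fintype.card_fin, smul_eq_mul]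
  push_cast
  ring

theorem fst_mul_combOneAB (hA : A.det = 1) :
    A * combOneAB A B p q r s = combOneAB A B (-q) (p + A.trace * q) (-s) (r + A.trace * s) := by
  have hAA := A.mul_self_fin_two
  rw [hA] at hAA
  simp only [combOneAB, mul_add, mul_smul_comm, mul_one, ← mul_assoc, hAA, sub_mul,
    smul_mul_assoc, one_mul]
  module

theorem snd_mul_combOneAB (hB : B.det = 1) :
    B * combOneAB A B p q r s =
      combOneAB A B (q * ((A * B).trace - A.trace * B.trace) - r - s * A.trace) (q * B.trace + s)
        (p + q * A.trace + r * B.trace + s * (A * B).trace) (-q) := by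
  have hBB := B.mul_self_fin_two
  rw [hB] at hBB
  have hBA : B * A = A.trace • B + B.trace • A
      + ((A * B).trace - A.trace * B.trace) • (1 : Matrix (Fin 2) (Fin 2) R) - A * B := by
    rw [← A.mul_add_mul_comm_fin_two B]
    abel
  have hBAB : B * (A * B) = (-A.trace) • 1 + A + (A * B).trace • B := by
    rw [← mul_assoc, hBA]
    simp only [sub_mul, add_mul, smul_mul_assoc, one_mul, mul_assoc, hBB, mul_sub, mul_smul_comm,
      mul_one]
    module
  simp only [combOneAB, mul_add, mul_smul_comm, mul_one, hBB, hBA, hBAB]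
  module

end CombOneAB

end Matrix

noncomputable def traceEval {R : Type*} [CommRing R] (A B : SL(2, R)) :
    MvPolynomial (Fin 3) ℤ →+* R :=
  eval₂Hom (Int.castRingHom R) ![(A : Matrix (Fin 2) (Fin 2) R).trace,
    (B : Matrix (Fin 2) (Fin 2) R).trace, ((A : Matrix (Fin 2) (Fin 2) R) * B).trace]

section TraceEval

variable {R : Type*} [CommRing R] (A B : SL(2, R))

@[simp] theorem traceEval_X_zero : traceEval A B (X 0) = (A : Matrix (Fin 2) (Fin 2) R).trace := by
  simp [traceEval]

@[simp] theorem traceEval_X_one : traceEval A B (X 1) = (B : Matrix (Fin 2) (Fin 2) R).trace := by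
  simp [traceEval]

@[simp] theorem traceEval_X_two :
    traceEval A B (X 2) = ((A : Matrix (Fin 2) (Fin 2) R) * B).trace := by
  simp [traceEval]

theorem traceEval_X_castSucc (i : Fin 2) :
    traceEval A B (X i.castSucc) = ((![A, B] i : SL(2, R)) : Matrix (Fin 2) (Fin 2) R).trace := by
  fin_cases i <;> simp

end TraceEval

def HasTraceCoordinates (w : FreeGroup (Fin 2)) : Prop :=
  ∃ p q r s : MvPolynomial (Fin 3) ℤ,
    ∀ (R : Type) [CommRing R] (A B : SL(2, R)),
      ((FreeGroup.lift ![A, B] w : SL(2, R)) : Matrix (Fin 2) (Fin 2) R) =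
        combOneAB A B (traceEval A B p) (traceEval A B q) (traceEval A B r) (traceEval A B s)

namespace HasTraceCoordinates

theorem one : HasTraceCoordinates 1 :=
  ⟨1, 0, 0, 0, fun R _ A B => by simp [combOneAB]⟩

theorem of_mul (i : Fin 2) {w : FreeGroup (Fin 2)} (hw : HasTraceCoordinates w) :
    HasTraceCoordinates (FreeGroup.of i * w) := by
  obtain ⟨p, q, r, s, hw⟩ := hw
  fin_cases i
  · refine ⟨-q, p + X 0 * q, -s, r + X 0 * s, fun R _ A B => ?_⟩
    rw [_root_.map_mul, Matrix.SpecialLinearGroup.coe_mul, hw R A B]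
    simp [fst_mul_combOneAB (hA := A.2)]
  · refine ⟨q * (X 2 - X 0 * X 1) - r - s * X 0, q * X 1 + s,
      p + q * X 0 + r * X 1 + s * X 2, -q, fun R _ A B => ?_⟩
    rw [_root_.map_mul, Matrix.SpecialLinearGroup.coe_mul, hw R A B]
    simp [snd_mul_combOneAB (hB := B.2)]

theorem inv_of_mul (i : Fin 2) {w : FreeGroup (Fin 2)} (hw : HasTraceCoordinates w) :
    HasTraceCoordinates ((FreeGroup.of i)⁻¹ * w) := by
  obtain ⟨p', q', r', s', hiw⟩ := of_mul i hw
  obtain ⟨p, q, r, s, hw⟩ := hw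
  refine ⟨X i.castSucc * p - p', X i.castSucc * q - q', X i.castSucc * r - r',
    X i.castSucc * s - s', fun R _ A B => ?_⟩
  have hinv : ((FreeGroup.lift ![A, B] ((FreeGroup.of i)⁻¹ * w) : SL(2, R)) :
      Matrix (Fin 2) (Fin 2) R) =
      ((![A, B] i : SL(2, R)) : Matrix (Fin 2) (Fin 2) R).trace •
          ((FreeGroup.lift ![A, B] w : SL(2, R)) : Matrix (Fin 2) (Fin 2) R)
        - ((FreeGroup.lift ![A, B] (FreeGroup.of i * w) : SL(2, R)) : Matrix (Fin 2) (Fin 2) R) := by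
    simp [Matrix.SpecialLinearGroup.coe_inv, adjugate_fin_two_eq_trace_smul_one_sub, sub_mul]
  rw [hinv, hw R A B, hiw R A B]
  simp only [combOneAB, _root_.map_mul, map_sub]
  rw [traceEval_X_castSucc]
  module

end HasTraceCoordinates

theorem hasTraceCoordinates (w : FreeGroup (Fin 2)) : HasTraceCoordinates w := by
  have hw : w ∈ Subgroup.closure (Set.range FreeGroup.of) := by simp
  induction hw using Subgroup.closure_induction_left with
  | one => exact .one
  | mul_left _ hx _ _ ih =>
    obtain ⟨i, rfl⟩ := hx
    exact ih.of_mul i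
  | inv_mul_cancel _ hx _ _ ih =>
    obtain ⟨i, rfl⟩ := hx
    exact ih.inv_of_mul i

theorem exists_trace_polynomial_general (w : FreeGroup (Fin 2)) :
    ∃ P : MvPolynomial (Fin 3) ℤ,
      ∀ (R : Type) [CommRing R] (A B : Matrix.SpecialLinearGroup (Fin 2) R),
        Matrix.trace ((FreeGroup.lift ![A, B] w : Matrix.SpecialLinearGroup (Fin 2) R) :
            Matrix (Fin 2) (Fin 2) R) =
          MvPolynomial.eval
            ![Matrix.trace (A : Matrix (Fin 2) (Fin 2) R),
              Matrix.trace (B : Matrix (Fin 2) (Fin 2) R),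
              Matrix.trace ((A * B : Matrix.SpecialLinearGroup (Fin 2) R) :
                Matrix (Fin 2) (Fin 2) R)]
            (MvPolynomial.map (Int.castRingHom R) P) := by
  obtain ⟨p, q, r, s, hw⟩ := hasTraceCoordinates w
  refine ⟨2 * p + X 0 * q + X 1 * r + X 2 * s, fun R _ A B => ?_⟩
  rw [hw R A B, trace_combOneAB, eval_map]
  simp [traceEval]

/-- For any non-trivial word `w` in the free group on two generators there is a
polynomial `P_w ∈ ℤ[s,t,u]` such that for all `A, B ∈ SL(2)` over any commutative
ring, `tr(w(A,B)) = P_w(tr A, tr B, tr AB)`. -/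
theorem exists_trace_polynomial (w : FreeGroup (Fin 2)) (hw : w ≠ 1) :
    ∃ P : MvPolynomial (Fin 3) ℤ,
      ∀ (R : Type) [CommRing R] (A B : Matrix.SpecialLinearGroup (Fin 2) R),
        Matrix.trace ((FreeGroup.lift ![A, B] w : Matrix.SpecialLinearGroup (Fin 2) R) :
            Matrix (Fin 2) (Fin 2) R) =
          MvPolynomial.eval
            ![Matrix.trace (A : Matrix (Fin 2) (Fin 2) R),
              Matrix.trace (B : Matrix (Fin 2) (Fin 2) R),
              Matrix.trace ((A * B : Matrix.SpecialLinearGroup (Fin 2) R) :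
                Matrix (Fin 2) (Fin 2) R)]
            (MvPolynomial.map (Int.castRingHom R) P) :=
  exists_trace_polynomial_general w
end

section
/- If w lies in the commutator subgroup [F₂, F₂], then the trace polynomial satisfies P_w(s,t,u) − 2 is divisible by F(s,t,u) = s² + t² + u² − stu − 4 in ℚ[s,t,u]; i.e., there exists Q_w ∈ ℚ[s,t,u] with P_w = Q_w·F + 2. -/
/-!
For diagonal matrices `A = diag(x, x⁻¹)`, `B = diag(y, y⁻¹)` the word `w`, being a product of
commutators, evaluates to the identity, so `P_w - 2` vanishes at
`(x + x⁻¹, y + y⁻¹, xy + (xy)⁻¹)`. Over an algebraically closed field these points fill the whole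
surface `F = 0`: above each `(t, u)` they give both roots in `s` of `F`, a monic quadratic in `s`.
Hence the remainder of `P_w - 2` on division by `F` in `s`, which is linear in `s`, vanishes at both
roots. Their difference squared is the discriminant `(t² - 4)(u² - 4)`, a nonzero polynomial, so the
remainder vanishes identically.
-/

open Matrix MvPolynomial

theorem MvPolynomial.eval₂_cons_eq_eval₂_finSuccEquiv {R S : Type*} [CommRing R] [CommRing S]
    {n : ℕ} (φ : R →+* S) (s : S) (v : Fin n → S) (p : MvPolynomial (Fin (n + 1)) R) :
    eval₂ φ (Fin.cons s v) p = (finSuccEquiv R n p).eval₂ (eval₂Hom φ v) s := by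
  induction p using MvPolynomial.induction_on with
  | C a => simp [finSuccEquiv_apply]
  | add p q hp hq => simp [hp, hq]
  | mul_X p i hp =>
    induction i using Fin.cases <;> simp [hp, finSuccEquiv_X_zero, finSuccEquiv_X_succ]

theorem MvPolynomial.eq_zero_of_forall_eval₂_eq_zero {R K σ : Type*} [CommRing R] [Field K]
    [Infinite K] {φ : R →+* K} (hφ : Function.Injective φ) {p : MvPolynomial σ R}
    (h : ∀ v : σ → K, eval₂ φ v p = 0) : p = 0 :=
  map_injective φ hφ <| funext fun v ↦ by simpa [← eval₂_eq_eval_map] using h v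

theorem IsAlgClosed.exists_units_add_inv_eq {K : Type*} [Field K] [IsAlgClosed K] (t : K) :
    ∃ y : Kˣ, (y : K) + ↑y⁻¹ = t := by
  obtain ⟨z, hz⟩ := IsAlgClosed.exists_root (Polynomial.C 1 * Polynomial.X ^ 2 +
      Polynomial.C (-t) * Polynomial.X + Polynomial.C 1)
    (by rw [Polynomial.degree_quadratic one_ne_zero]; decide)
  simp only [Polynomial.IsRoot.def, Polynomial.eval_add, Polynomial.eval_mul, Polynomial.eval_pow,
    Polynomial.eval_C, Polynomial.eval_X] at hz
  have hz0 : z ≠ 0 := by rintro rfl; simp at hz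
  refine ⟨Units.mk0 z hz0, ?_⟩
  simp only [Units.val_mk0, Units.val_inv_eq_inv_val]
  field_simp
  linear_combination hz

def diagonalSL2 (R : Type*) [CommRing R] : Rˣ →* SpecialLinearGroup (Fin 2) R where
  toFun x := ⟨diagonal ![(x : R), ↑x⁻¹], by simp [det_diagonal]⟩
  map_one' := Subtype.ext <| by simp [← diagonal_one, ← Matrix.vecCons_const]
  map_mul' x y := Subtype.ext <| by
    change diagonal _ = diagonal _ * diagonal _
    rw [diagonal_mul_diagonal]
    congr 1
    ext i
    fin_cases i <;> simp [mul_comm]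

theorem coe_diagonalSL2 {R : Type*} [CommRing R] (x : Rˣ) :
    (diagonalSL2 R x : Matrix (Fin 2) (Fin 2) R) = diagonal ![(x : R), ↑x⁻¹] :=
  rfl

theorem trace_diagonalSL2 {R : Type*} [CommRing R] (x : Rˣ) :
    trace (diagonalSL2 R x : Matrix (Fin 2) (Fin 2) R) = x + ↑x⁻¹ := by
  simp [coe_diagonalSL2, trace_diagonal, Fin.sum_univ_two]

theorem lift_diagonalSL2_eq_one_of_mem_commutator {R ι : Type*} [CommRing R] {w : FreeGroup ι}
    (hw : w ∈ commutator (FreeGroup ι)) (x : ι → Rˣ) :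
    FreeGroup.lift (diagonalSL2 R ∘ x) w = 1 := by
  have hfactor : FreeGroup.lift (diagonalSL2 R ∘ x) =
      (diagonalSL2 R).comp (FreeGroup.lift x) :=
    FreeGroup.ext_hom _ _ fun i ↦ by simp
  rw [hfactor, MonoidHom.comp_apply,
    MonoidHom.mem_ker.mp (Abelianization.commutator_subset_ker _ hw), map_one]

noncomputable def frickePolynomial (R : Type*) [CommRing R] : MvPolynomial (Fin 3) R :=
  X 0 ^ 2 + X 1 ^ 2 + X 2 ^ 2 - X 0 * X 1 * X 2 - 4

def diagonalTraces {K : Type*} [Field K] (x y : Kˣ) : Fin 3 → K :=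
  ![x + ↑x⁻¹, y + ↑y⁻¹, ↑(x * y) + ↑(x * y)⁻¹]

theorem eval₂_diagonalTraces_frickePolynomial {R K : Type*} [CommRing R] [Field K] (φ : R →+* K)
    (x y : Kˣ) : eval₂ φ (diagonalTraces x y) (frickePolynomial R) = 0 := by
  simp only [diagonalTraces, frickePolynomial, Units.val_inv_eq_inv_val, Units.val_mul,
    _root_.mul_inv_rev, eval₂_sub, eval₂_add, eval₂_mul, eval₂_pow, eval₂_X, eval₂_ofNat,
    cons_val_zero, cons_val_one, cons_val]
  field_simp
  ring

theorem exists_diagonalTraces_of_fibre {K : Type*} [Field K] [IsAlgClosed K] (t u : K) :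
    ∃ s₁ s₂ : K, (s₁ - s₂) ^ 2 = (t ^ 2 - 4) * (u ^ 2 - 4) ∧
      (∃ x y : Kˣ, diagonalTraces x y = ![s₁, t, u]) ∧
      ∃ x y : Kˣ, diagonalTraces x y = ![s₂, t, u] := by
  obtain ⟨y, rfl⟩ := IsAlgClosed.exists_units_add_inv_eq t
  obtain ⟨c, rfl⟩ := IsAlgClosed.exists_units_add_inv_eq u
  refine ⟨↑(c * y⁻¹) + ↑(c * y⁻¹)⁻¹, ↑(c * y) + ↑(c * y)⁻¹, ?_, ⟨c * y⁻¹, y, ?_⟩, c * y, y⁻¹, ?_⟩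
  · simp only [Units.val_mul, Units.val_inv_eq_inv_val, _root_.mul_inv_rev, inv_inv]
    field_simp
    ring
  · simp [diagonalTraces]
  · simp [diagonalTraces, add_comm]

theorem finSuccEquiv_frickePolynomial (R : Type*) [CommRing R] :
    finSuccEquiv R 2 (frickePolynomial R) = Polynomial.X ^ 2 +
      Polynomial.C (-(X 0 * X 1)) * Polynomial.X + Polynomial.C (X 0 ^ 2 + X 1 ^ 2 - 4) := by
  simp only [frickePolynomial, show (1 : Fin 3) = Fin.succ 0 from rfl,
    show (2 : Fin 3) = Fin.succ 1 from rfl, map_add, map_sub, map_mul, map_pow, map_ofNat,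
    finSuccEquiv_X_zero, finSuccEquiv_X_succ, map_neg]
  ring

theorem monic_finSuccEquiv_frickePolynomial (R : Type*) [CommRing R] [Nontrivial R] :
    (finSuccEquiv R 2 (frickePolynomial R)).Monic := by
  rw [Polynomial.Monic, finSuccEquiv_frickePolynomial, ← one_mul (Polynomial.X ^ 2),
    ← Polynomial.C_1]
  exact Polynomial.leadingCoeff_quadratic one_ne_zero

theorem natDegree_finSuccEquiv_frickePolynomial (R : Type*) [CommRing R] [Nontrivial R] :
    (finSuccEquiv R 2 (frickePolynomial R)).natDegree = 2 := by
  rw [finSuccEquiv_frickePolynomial, ← one_mul (Polynomial.X ^ 2), ← Polynomial.C_1]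
  exact Polynomial.natDegree_quadratic one_ne_zero

-- Division in the variable `X 0`: coefficients are polynomials in `X 1, X 2`, renamed `X 0, X 1`.
noncomputable def frickeRemainder {R : Type*} [CommRing R] (g : MvPolynomial (Fin 3) R) :
    Polynomial (MvPolynomial (Fin 2) R) :=
  finSuccEquiv R 2 g %ₘ finSuccEquiv R 2 (frickePolynomial R)

theorem frickeRemainder_eq_C_mul_X_add_C {R : Type*} [CommRing R] [Nontrivial R]
    (g : MvPolynomial (Fin 3) R) :
    frickeRemainder g = Polynomial.C ((frickeRemainder g).coeff 1) * Polynomial.X +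
      Polynomial.C ((frickeRemainder g).coeff 0) := by
  have hdeg := Polynomial.natDegree_modByMonic_lt (finSuccEquiv R 2 g)
    (monic_finSuccEquiv_frickePolynomial R)
    fun h ↦ by simpa [h] using natDegree_finSuccEquiv_frickePolynomial R
  rw [natDegree_finSuccEquiv_frickePolynomial] at hdeg
  exact Polynomial.eq_X_add_C_of_natDegree_le_one (Nat.le_of_lt_succ hdeg)

theorem eval₂_frickeRemainder {R S : Type*} [CommRing R] [CommRing S] (φ : R →+* S)
    (g : MvPolynomial (Fin 3) R) {s t u : S}
    (hF : eval₂ φ ![s, t, u] (frickePolynomial R) = 0) :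
    (frickeRemainder g).eval₂ (eval₂Hom φ ![t, u]) s = eval₂ φ ![s, t, u] g := by
  rw [show ![s, t, u] = Fin.cons s ![t, u] from rfl, eval₂_cons_eq_eval₂_finSuccEquiv] at hF ⊢
  exact Polynomial.eval₂_modByMonic_eq_self_of_root hF

theorem frickePolynomial_dvd_of_frickeRemainder_eq_zero {R : Type*} [CommRing R] [Nontrivial R]
    {g : MvPolynomial (Fin 3) R} (h : frickeRemainder g = 0) : frickePolynomial R ∣ g :=
  (map_dvd_iff (finSuccEquiv R 2)).mp <|
    (Polynomial.modByMonic_eq_zero_iff_dvd (monic_finSuccEquiv_frickePolynomial R)).mp h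

theorem frickePolynomial_dvd_of_eval₂_diagonalTraces_eq_zero {R K : Type*} [CommRing R] [Field K]
    [IsAlgClosed K] [CharZero K] {φ : R →+* K} (hφ : Function.Injective φ)
    {g : MvPolynomial (Fin 3) R} (hg : ∀ x y : Kˣ, eval₂ φ (diagonalTraces x y) g = 0) :
    frickePolynomial R ∣ g := by
  have : Nontrivial R := φ.domain_nontrivial
  obtain ⟨a, b, hlinear⟩ :
      ∃ a b, frickeRemainder g = Polynomial.C a * Polynomial.X + Polynomial.C b :=
    ⟨_, _, frickeRemainder_eq_C_mul_X_add_C g⟩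
  have hroot : ∀ (x y : Kˣ) (s t u : K), diagonalTraces x y = ![s, t, u] →
      eval₂ φ ![t, u] a * s + eval₂ φ ![t, u] b = 0 := by
    intro x y s t u h
    have hF := eval₂_diagonalTraces_frickePolynomial φ x y
    rw [h] at hF
    have hrem := eval₂_frickeRemainder φ g hF
    rw [hlinear, ← h, hg x y] at hrem
    simpa using hrem
  have ha : a = 0 := by
    refine map_injective φ hφ ?_
    have hdisc : map φ a ^ 2 * ((X 0 ^ 2 - 4) * (X 1 ^ 2 - 4)) = 0 := by
      refine funext fun v ↦ ?_
      obtain ⟨t, u, rfl⟩ : ∃ t u, v = ![t, u] := ⟨v 0, v 1, (FinVec.etaExpand_eq v).symm⟩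
      obtain ⟨s₁, s₂, hs, ⟨x₁, y₁, h₁⟩, x₂, y₂, h₂⟩ := exists_diagonalTraces_of_fibre t u
      simp only [eval_mul, eval_pow, eval_map, eval_sub, eval_X, eval_ofNat, map_zero,
        cons_val_zero, cons_val_one]
      linear_combination (eval₂ φ ![t, u] a * (s₁ - s₂)) *
        (hroot x₁ y₁ s₁ t u h₁ - hroot x₂ y₂ s₂ t u h₂) - eval₂ φ ![t, u] a ^ 2 * hs
    have hdisc_ne_zero : ((X 0 ^ 2 - 4) * (X 1 ^ 2 - 4) : MvPolynomial (Fin 2) K) ≠ 0 := fun h ↦ by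
      have h16 := congrArg (eval 0) h
      simp only [eval_mul, eval_sub, eval_pow, eval_X, eval_ofNat, map_zero] at h16
      norm_num at h16
    simpa [hdisc_ne_zero] using hdisc
  have hb : b = 0 := by
    refine eq_zero_of_forall_eval₂_eq_zero hφ fun v ↦ ?_
    obtain ⟨t, u, rfl⟩ : ∃ t u, v = ![t, u] := ⟨v 0, v 1, (FinVec.etaExpand_eq v).symm⟩
    obtain ⟨s, -, -, ⟨x, y, h⟩, -⟩ := exists_diagonalTraces_of_fibre t u
    simpa [ha] using hroot x y s t u h
  refine frickePolynomial_dvd_of_frickeRemainder_eq_zero ?_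
  rw [hlinear, ha, hb]
  simp

/-- If `w` lies in the commutator subgroup of the free group on two generators, then
its trace polynomial `P_w` satisfies `P_w = Q_w·F + 2` in `ℚ[s,t,u]`, where
`F = s² + t² + u² − stu − 4`. -/
theorem trace_polynomial_commutator_divisible
    (w : FreeGroup (Fin 2)) (hw : w ∈ commutator (FreeGroup (Fin 2)))
    (P : MvPolynomial (Fin 3) ℤ)
    (hP : ∀ (K : Type) [Field K] [CharZero K] (A B : Matrix.SpecialLinearGroup (Fin 2) K),
      Matrix.trace ((FreeGroup.lift ![A, B] w : Matrix.SpecialLinearGroup (Fin 2) K) :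
          Matrix (Fin 2) (Fin 2) K) =
        MvPolynomial.eval
          ![Matrix.trace (A : Matrix (Fin 2) (Fin 2) K),
            Matrix.trace (B : Matrix (Fin 2) (Fin 2) K),
            Matrix.trace ((A * B : Matrix.SpecialLinearGroup (Fin 2) K) :
              Matrix (Fin 2) (Fin 2) K)]
          (MvPolynomial.map (Int.castRingHom K) P)) :
    ∃ Q : MvPolynomial (Fin 3) ℚ,
      MvPolynomial.map (Int.castRingHom ℚ) P =
        Q * (MvPolynomial.X 0 ^ 2 + MvPolynomial.X 1 ^ 2 + MvPolynomial.X 2 ^ 2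
          - MvPolynomial.X 0 * MvPolynomial.X 1 * MvPolynomial.X 2 - 4) + 2 := by
  have hvanish : ∀ x y : ℂˣ, eval₂ (Int.castRingHom ℂ) (diagonalTraces x y) (P - 2) = 0 := by
    intro x y
    have h := hP ℂ (diagonalSL2 ℂ x) (diagonalSL2 ℂ y)
    rw [show ![diagonalSL2 ℂ x, diagonalSL2 ℂ y] = diagonalSL2 ℂ ∘ ![x, y] from
        FinVec.map_eq (diagonalSL2 ℂ) ![x, y],
      lift_diagonalSL2_eq_one_of_mem_commutator hw, ← map_mul] at h
    simp only [trace_diagonalSL2, eval_map] at h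
    rw [eval₂_sub, diagonalTraces, ← h]
    simp
  obtain ⟨Q, hQ⟩ := frickePolynomial_dvd_of_eval₂_diagonalTraces_eq_zero
    (RingHom.injective_int (Int.castRingHom ℂ)) hvanish
  refine ⟨map (Int.castRingHom ℚ) Q, ?_⟩
  have hQℚ := congrArg (map (Int.castRingHom ℚ)) hQ
  simp only [frickePolynomial, map_sub, map_add, map_mul, map_pow, map_X,
    MvPolynomial.map_ofNat] at hQℚ
  linear_combination hQℚ
end
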